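/- arXiv:math/0612397 — 5 statements merged into one kernel-verified Lean document; each statement's English description precedes it below -/
import Mathlib

section
/- Let F be a field of characteristic zero, α ∈ F, and L, S elements of an associative unital F-algebra satisfying [SLS, L] = 0 and S² = αS + 1. Suppose also that L·Q(L) = β·L for a polynomial Q over F and β ∈ F. Then for every m ≥ 1, [S·L^m·S, Q(L)] = 0. -/
lemma commute_aeval_aux {F : Type*} [CommSemiring F] {A : Type*} [Semiring A] [Algebra F A]
    {x y : A} (h : Commute x y) (p : Polynomial F) : Commute x (Polynomial.aeval y p) := by
  induction p using Polynomial.induction_on' with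
  | add p q hp hq => rw [map_add]; exact Commute.add_right hp hq
  | monomial n a =>
      rw [Polynomial.aeval_monomial]
      exact Commute.mul_right (Algebra.commute_algebraMap_right a x) (h.pow_right n)

/-- Induction step of Lemma 5.1: under the hypotheses (a)-(c),
`[S L^m S, Q(L)] = 0` for every `m ≥ 1`. -/
theorem stmt_2 (F : Type*) [Field F] [CharZero F]
    (A : Type*) [Ring A] [Algebra F A]
    (Q : Polynomial F) (α β : F) (L S : A)
    (ha : S * L * S * L - L * (S * L * S) = 0)
    (hb : S ^ 2 = α • S + 1)
    (hc : L * Polynomial.aeval L Q = β • L) :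
    ∀ m : ℕ, 1 ≤ m →
      S * L ^ m * S * Polynomial.aeval L Q
        - Polynomial.aeval L Q * (S * L ^ m * S) = 0 := by
  set P := Polynomial.aeval L Q with hPdef
  set T := S * L * S with hT
  have hTL : Commute T L := sub_eq_zero.mp ha
  have hTP : Commute T P := commute_aeval_aux hTL Q
  have hLP : Commute L P := commute_aeval_aux (Commute.refl L) Q
  have hTLm : ∀ m : ℕ, Commute T (L ^ m) := fun m => hTL.pow_right m
  have hSS : S * S = α • S + 1 := by rw [← sq]; exact hb
  have hSinv : S * (S - α • (1 : A)) = 1 := by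
    rw [mul_sub, hSS, mul_smul_comm, mul_one]; abel
  have hLmP : ∀ m : ℕ, 1 ≤ m → L ^ m * P = β • L ^ m := by
    intro m hm
    obtain ⟨k, rfl⟩ : ∃ k, m = k + 1 := ⟨m - 1, by omega⟩
    rw [pow_succ, mul_assoc, hc, mul_smul_comm, ← pow_succ]
  have hTS : T * S = α • T + S * L := by
    calc T * S = S * L * (S * S) := by rw [hT, mul_assoc]
      _ = S * L * (α • S + 1) := by rw [hSS]
      _ = α • T + S * L := by
          rw [mul_add, mul_one, mul_smul_comm, ← hT]
  -- key commutation: (T * L^m * S) commutes with P for m ≥ 1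
  have hX : ∀ m : ℕ, 1 ≤ m → Commute (T * L ^ m * S) P := by
    intro m hm
    have lhs : T * L ^ m * S * P = (α * β) • (L ^ m * T) + β • (L ^ m * (S * L)) := by
      calc T * L ^ m * S * P = L ^ m * T * S * P := by rw [(hTLm m).eq]
        _ = L ^ m * (T * S) * P := by rw [mul_assoc (L ^ m) T S]
        _ = L ^ m * (α • T + S * L) * P := by rw [hTS]
        _ = α • (L ^ m * (T * P)) + L ^ m * (S * (L * P)) := by
            simp only [mul_add, add_mul, mul_smul_comm, smul_mul_assoc, mul_assoc]
        _ = α • (L ^ m * (P * T)) + L ^ m * (S * (β • L)) := by rw [hTP.eq, hc]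
        _ = α • (L ^ m * P * T) + β • (L ^ m * (S * L)) := by
            simp only [mul_smul_comm, mul_assoc]
        _ = (α * β) • (L ^ m * T) + β • (L ^ m * (S * L)) := by
            rw [hLmP m hm, smul_mul_assoc, smul_smul]
    have rhs : P * (T * L ^ m * S) = (α * β) • (L ^ m * T) + β • (L ^ m * (S * L)) := by
      calc P * (T * L ^ m * S) = P * (L ^ m * T * S) := by rw [(hTLm m).eq]
        _ = P * L ^ m * (T * S) := by simp only [mul_assoc]
        _ = (β • L ^ m) * (α • T + S * L) := by
            rw [show P * L ^ m = β • L ^ m from by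
              rw [← (hLP.pow_left m).eq]; exact hLmP m hm, hTS]
        _ = (α * β) • (L ^ m * T) + β • (L ^ m * (S * L)) := by
            rw [smul_mul_assoc, mul_add, smul_add, mul_smul_comm, smul_smul,
              mul_comm β α]
    rw [Commute, SemiconjBy, lhs, rhs]
  -- main induction
  intro m hm
  induction m with
  | zero => omega
  | succ n ih =>
    rcases Nat.lt_or_ge 1 (n + 1) with h1 | h1
    · have hn : 1 ≤ n := by omega
      have ihn := ih hn
      have hTSinv : T * (S - α • (1 : A)) = S * L := by
        rw [hT, mul_assoc, hSinv, mul_one]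
      have key : S * L ^ (n + 1) * S
          = T * (S * L ^ n * S) - α • (T * L ^ n * S) := by
        have e1 : S * L ^ (n + 1) * S = T * (S - α • (1 : A)) * L ^ n * S := by
          rw [hTSinv, pow_succ', ← mul_assoc]
        rw [e1, mul_sub]
        rw [sub_mul, sub_mul]
        congr 1
        · simp only [mul_assoc]
        · rw [mul_smul_comm, mul_one, smul_mul_assoc, smul_mul_assoc]
      have hXn : Commute (S * L ^ n * S) P := sub_eq_zero.mp ihn
      have hcomb : Commute (T * (S * L ^ n * S) - α • (T * L ^ n * S)) P :=
        (hTP.mul_left hXn).sub_left ((hX n hn).smul_left α)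
      rw [key, sub_eq_zero]
      exact hcomb.eq
    · have hn : n = 0 := by omega
      subst hn
      rw [pow_one, sub_eq_zero]
      exact hTP.eq
end

section
/- For pairwise distinct complex numbers λ₁, …, λ_l, complex numbers ν₁, …, ν_l, and ω ∈ ℂ, define C_i(λ, ν, ω) = ν_i · ∏_{j ≠ i} (1 + ω·ν_j·λ_j/(λ_i − λ_j)) and S(λ, ν, ω) = Σ_{i=1}^l C_i(λ, ν, ω). Then ω·S(λ, ν, ω) = 1 − ∏_{i=1}^l (1 − ω·ν_i). -/
open Finset

/-- The coefficient functions `C_i(λ, ν, ω)`. -/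
noncomputable def CC {l : ℕ} (lam nu : Fin l → ℂ) (ω : ℂ) (i : Fin l) : ℂ :=
  nu i * ∏ j ∈ Finset.univ.erase i, (1 + ω * nu j * lam j / (lam i - lam j))

open Polynomial in
lemma key_aux {l : ℕ} (lam nu : Fin l → ℂ) (ω : ℂ)
    (hlam : Function.Injective lam) (h0 : ∀ i, lam i ≠ 0) :
    ω * ∑ i, CC lam nu ω i = 1 - ∏ i, (1 - ω * nu i) := by
  classical
  set μ : Fin l → ℂ := fun i => (1 - ω * nu i) * lam i with hμ
  set p : ℂ[X] := ∏ i, (X - C (lam i)) with hp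
  set q : ℂ[X] := ∏ i, (X - C (μ i)) with hq
  have hpm : p.Monic := monic_prod_of_monic _ _ fun i _ => monic_X_sub_C _
  have hqm : q.Monic := monic_prod_of_monic _ _ fun i _ => monic_X_sub_C _
  have hpd : p.degree = l := by
    rw [hp, degree_prod]
    simp [degree_X_sub_C]
  have hqd : q.degree = l := by
    rw [hq, degree_prod]
    simp [degree_X_sub_C]
  have hdeg : (p - q).degree < (univ : Finset (Fin l)).card := by
    rcases eq_or_ne p q with h | h
    · rw [h, sub_self, degree_zero]
      simp [Nat.cast_withBot]
    · have := Polynomial.degree_sub_lt (hpd.trans hqd.symm) hpm.ne_zero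
        (by rw [hpm.leadingCoeff, hqm.leadingCoeff])
      rw [hpd] at this
      simpa using this
  have hinj : Set.InjOn lam (univ : Finset (Fin l)) := fun a _ b _ h => hlam h
  have hrepr := Lagrange.eq_interpolate (f := p - q) hinj hdeg
  have E := congrArg (Polynomial.eval 0) hrepr
  rw [Lagrange.interpolate_apply] at E
  simp only [eval_sub, eval_finset_sum, eval_mul, eval_C] at E
  -- compute the pieces
  have hevalp0 : p.eval 0 = ∏ i, (0 - lam i) := by
    simp [hp, eval_prod]
  have hevalq0 : q.eval 0 = (∏ i, (1 - ω * nu i)) * ∏ i, (0 - lam i) := by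
    rw [hq, eval_prod, ← prod_mul_distrib]
    refine Finset.prod_congr rfl fun i _ => ?_
    simp only [hμ, Polynomial.eval_sub, Polynomial.eval_X, Polynomial.eval_C]
    ring
  have hevalpi : ∀ i : Fin l, p.eval (lam i) = 0 := fun i => by
    rw [hp, eval_prod]
    exact Finset.prod_eq_zero (mem_univ i) (by simp)
  have hevalqi : ∀ i : Fin l, q.eval (lam i) = ∏ j, (lam i - μ j) := fun i => by
    simp [hq, eval_prod]
  have hbasis : ∀ i : Fin l, (Lagrange.basis univ lam i).eval 0
      = (∏ j ∈ univ.erase i, (lam i - lam j)⁻¹) * ∏ j ∈ univ.erase i, (0 - lam j) := by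
    intro i
    rw [Lagrange.basis, eval_prod, ← prod_mul_distrib]
    refine Finset.prod_congr rfl fun j _ => ?_
    simp [Lagrange.basisDivisor]
  rw [hevalp0, hevalq0] at E
  simp only [hevalpi, hevalqi, hbasis, zero_sub_zero] at E
  -- nonvanishing facts
  have hne : ∀ i j : Fin l, j ≠ i → lam i - lam j ≠ 0 := fun i j hji =>
    sub_ne_zero_of_ne fun h => hji (hlam h.symm)
  have hP0 : (∏ i, (0 - lam i)) ≠ 0 :=
    prod_ne_zero_iff.2 fun i _ => by simpa using h0 i
  -- rewrite the goal
  have hgoal : ω * ∑ i, CC lam nu ω i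
      = ∑ i, ω * nu i * ((∏ j ∈ univ.erase i, (lam i - μ j)) *
          ∏ j ∈ univ.erase i, (lam i - lam j)⁻¹) := by
    rw [Finset.mul_sum]
    refine Finset.sum_congr rfl fun i _ => ?_
    rw [_root_.CC, ← prod_mul_distrib]
    have : ∀ j ∈ univ.erase i, (1 + ω * nu j * lam j / (lam i - lam j))
        = (lam i - μ j) * (lam i - lam j)⁻¹ := by
      intro j hj
      have h := hne i j (mem_erase.1 hj).1
      field_simp [hμ]
      ring
    rw [Finset.prod_congr rfl this]
    ring
  rw [hgoal]
  -- termwise transformation of E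
  have hterm : ∀ i : Fin l,
      (0 - ∏ j, (lam i - μ j)) * ((∏ j ∈ univ.erase i, (lam i - lam j)⁻¹) *
        ∏ j ∈ univ.erase i, (0 - lam j))
      = ω * nu i * ((∏ j ∈ univ.erase i, (lam i - μ j)) *
          ∏ j ∈ univ.erase i, (lam i - lam j)⁻¹) * ∏ j, (0 - lam j) := by
    intro i
    have hi : ∏ j, (lam i - μ j) = (lam i - μ i) * ∏ j ∈ univ.erase i, (lam i - μ j) :=
      (Finset.mul_prod_erase univ _ (mem_univ i)).symm
    have hPi : ∏ j, (0 - lam j) = (0 - lam i) * ∏ j ∈ univ.erase i, (0 - lam j) :=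
      (Finset.mul_prod_erase univ _ (mem_univ i)).symm
    have hμi : lam i - μ i = ω * nu i * lam i := by rw [hμ]; ring
    rw [hi, hPi, hμi]
    ring
  have E2 := E.trans (Finset.sum_congr rfl fun i _ => hterm i)
  have E3 : (∑ i, ω * nu i * ((∏ j ∈ univ.erase i, (lam i - μ j)) *
      ∏ j ∈ univ.erase i, (lam i - lam j)⁻¹)) * ∏ j, (0 - lam j)
      = (1 - ∏ i, (1 - ω * nu i)) * ∏ j, (0 - lam j) := by
    rw [Finset.sum_mul]
    rw [← E2]
    ring
  exact mul_right_cancel₀ hP0 E3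

/-- Proposition A.2: `ω · S(λ, ν, ω) = 1 − ∏ᵢ (1 − ω νᵢ)`. -/
theorem stmt_3 (l : ℕ) (lam nu : Fin l → ℂ) (ω : ℂ)
    (hlam : Function.Injective lam) :
    ω * ∑ i, CC lam nu ω i = 1 - ∏ i, (1 - ω * nu i) := by
  classical
  set f : ℂ → ℂ := fun ε => ω * ∑ i, CC (fun j => lam j + ε) nu ω i with hf
  have hfc : Continuous f := by
    rw [hf]
    simp only [CC]
    refine continuous_const.mul (continuous_finset_sum _ fun i _ =>
      continuous_const.mul (continuous_finset_prod _ fun j hj => ?_))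
    have hij : lam i ≠ lam j := fun h => (mem_erase.1 hj).1 (hlam h.symm)
    refine continuous_const.add (Continuous.div (by fun_prop) (by fun_prop) fun ε => ?_)
    rw [show lam i + ε - (lam j + ε) = lam i - lam j from by ring]
    exact sub_ne_zero.2 hij
  have hev : ∀ᶠ ε in nhdsWithin (0 : ℂ) {0}ᶜ,
      f ε = 1 - ∏ i, (1 - ω * nu i) := by
    have hS : {ε : ℂ | ∀ i, lam i ≠ 0 → lam i + ε ≠ 0} ∈ nhds (0 : ℂ) := by
      apply IsOpen.mem_nhds
      · have : {ε : ℂ | ∀ i, lam i ≠ 0 → lam i + ε ≠ 0}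
            = ⋂ i, {ε : ℂ | lam i ≠ 0 → lam i + ε ≠ 0} := by
          ext ε; simp
        rw [this]
        refine isOpen_iInter_of_finite fun i => ?_
        by_cases h : lam i = 0
        · simp [h]
        · have : {ε : ℂ | lam i ≠ 0 → lam i + ε ≠ 0}
              = (fun ε => lam i + ε) ⁻¹' {0}ᶜ := by
            ext ε
            simp only [Set.mem_setOf_eq, Set.mem_preimage, Set.mem_compl_iff,
              Set.mem_singleton_iff, h, ne_eq, not_false_iff, true_implies, forall_true_left]
          rw [this]
          exact isOpen_compl_singleton.preimage (by fun_prop)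
      · intro i hi
        simpa using hi
    filter_upwards [mem_nhdsWithin_of_mem_nhds hS, self_mem_nhdsWithin] with ε hε hε0
    have hε0' : ε ≠ 0 := hε0
    refine key_aux _ nu ω (fun a b h => hlam ?_) fun i => ?_
    · exact add_right_cancel h
    · by_cases h : lam i = 0
      · simpa [h] using hε0'
      · exact hε i h
  have h1 : Filter.Tendsto f (nhdsWithin (0 : ℂ) {0}ᶜ) (nhds (f 0)) :=
    (hfc.tendsto 0).mono_left nhdsWithin_le_nhds
  have h2 : Filter.Tendsto f (nhdsWithin (0 : ℂ) {0}ᶜ)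
      (nhds (1 - ∏ i, (1 - ω * nu i))) :=
    Filter.Tendsto.congr' (hev.mono fun ε h => h.symm) tendsto_const_nhds
  have hfin : f 0 = 1 - ∏ i, (1 - ω * nu i) := tendsto_nhds_unique h1 h2
  have : (fun j => lam j + (0 : ℂ)) = lam := by funext j; ring
  rw [hf] at hfin
  simpa [this] using hfin
end

section
/- With C_i as defined (C_i(λ, ν, ω) = ν_i · ∏_{j ≠ i} (1 + ω·ν_j·λ_j/(λ_i − λ_j)) for pairwise distinct λ₁,…,λ_l), the function S(λ, ν, ω) = Σ_{i=1}^l C_i(λ, ν, ω) is a symmetric function of λ: for any permutation σ of {1,…,l} applied simultaneously only to the λ-arguments (keeping ν fixed), S is unchanged. In particular S(λ, ν, ω) is invariant under the transposition λ₁ ↔ λ₂. -/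
open Finset

open Polynomial Lagrange in
lemma key0 {ι : Type*} [DecidableEq ι] (s : Finset ι) (lam nu : ι → ℂ) (ω : ℂ)
    (hinj : Set.InjOn lam s) (h0 : ∀ i ∈ s, lam i ≠ 0) :
    ω * ∑ i ∈ s, nu i * ∏ j ∈ s.erase i, (1 + ω * nu j * lam j / (lam i - lam j))
      = 1 - ∏ i ∈ s, (1 - ω * nu i) := by
  set μ : ι → ℂ := fun j => lam j * (1 - ω * nu j) with hμ
  set f : ℂ[X] := nodal s μ - nodal s lam with hf
  have hdeg : f.degree < (#s : WithBot ℕ) := by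
    have := degree_sub_lt (p := nodal s μ) (q := nodal s lam)
      (by rw [degree_nodal, degree_nodal]) nodal_ne_zero
      (by rw [nodal_monic.leadingCoeff, nodal_monic.leadingCoeff])
    rwa [degree_nodal] at this
  have hfe := eq_interpolate (f := f) hinj hdeg
  have h00 := congrArg (Polynomial.eval 0) hfe
  rw [interpolate_apply, eval_finset_sum] at h00
  simp only [eval_mul, eval_C, Lagrange.basis, eval_prod, basisDivisor, eval_mul, eval_C,
    eval_sub, eval_X] at h00
  set P : ℂ := ∏ j ∈ s, (0 - lam j) with hP
  set Q : ℂ := ∏ j ∈ s, (1 - ω * nu j) with hQ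
  have hPne : P ≠ 0 := by
    rw [hP, Finset.prod_ne_zero_iff]
    intro j hj
    exact sub_ne_zero.mpr (Ne.symm (h0 j hj))
  have e0 : Polynomial.eval 0 f = P * Q - P := by
    rw [hf, eval_sub, eval_nodal, eval_nodal, hP, hQ, ← prod_mul_distrib]
    congr 1
    exact Finset.prod_congr rfl fun j _ => by rw [hμ]; ring
  have key : ∀ i ∈ s,
      Polynomial.eval (lam i) f * ∏ j ∈ s.erase i, ((lam i - lam j)⁻¹ * (0 - lam j))
        = -ω * P * (nu i * ∏ j ∈ s.erase i, (1 + ω * nu j * lam j / (lam i - lam j))) := by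
    intro i hi
    have e1 : Polynomial.eval (lam i) f
        = (ω * nu i * lam i) * ∏ j ∈ s.erase i, (lam i - μ j) := by
      rw [hf, eval_sub, eval_nodal, eval_nodal_at_node hi, sub_zero,
        ← Finset.mul_prod_erase s (fun j => lam i - μ j) hi]
      congr 1
      rw [hμ]; ring
    have e2 : ∀ j ∈ s.erase i,
        (lam i - μ j) * ((lam i - lam j)⁻¹ * (0 - lam j))
          = (0 - lam j) * (1 + ω * nu j * lam j / (lam i - lam j)) := by
      intro j hj
      obtain ⟨hji, hjs⟩ := Finset.mem_erase.mp hj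
      have hne : lam i - lam j ≠ 0 :=
        sub_ne_zero.mpr fun h => hji (hinj hjs hi h.symm)
      have hx : 1 + ω * nu j * lam j / (lam i - lam j)
          = (1 * (lam i - lam j) + ω * nu j * lam j) / (lam i - lam j) :=
        add_div' _ _ _ hne
      rw [hx, div_eq_mul_inv, hμ]
      ring
    calc Polynomial.eval (lam i) f * ∏ j ∈ s.erase i, ((lam i - lam j)⁻¹ * (0 - lam j))
        = (ω * nu i * lam i) *
            ∏ j ∈ s.erase i, ((lam i - μ j) * ((lam i - lam j)⁻¹ * (0 - lam j))) := by
          rw [e1, mul_assoc, ← prod_mul_distrib]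
      _ = (ω * nu i * lam i) *
            ∏ j ∈ s.erase i, ((0 - lam j) * (1 + ω * nu j * lam j / (lam i - lam j))) := by
          rw [Finset.prod_congr rfl e2]
      _ = -ω * ((0 - lam i) * ∏ j ∈ s.erase i, (0 - lam j)) *
            (nu i * ∏ j ∈ s.erase i, (1 + ω * nu j * lam j / (lam i - lam j))) := by
          rw [prod_mul_distrib]; ring
      _ = -ω * P * (nu i * ∏ j ∈ s.erase i, (1 + ω * nu j * lam j / (lam i - lam j))) := by
          rw [hP, Finset.mul_prod_erase s (fun j => 0 - lam j) hi]
  rw [e0, Finset.sum_congr rfl key, ← Finset.mul_sum] at h00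
  have h2 := mul_left_cancel₀ hPne (show P * (Q - 1) =
      P * (-ω * ∑ i ∈ s, nu i * ∏ j ∈ s.erase i, (1 + ω * nu j * lam j / (lam i - lam j))) by
    linear_combination h00)
  linear_combination h2

lemma key1 {ι : Type*} [DecidableEq ι] (s : Finset ι) (lam nu : ι → ℂ) (ω : ℂ)
    (hinj : Set.InjOn lam s) :
    ω * ∑ i ∈ s, nu i * ∏ j ∈ s.erase i, (1 + ω * nu j * lam j / (lam i - lam j))
      = 1 - ∏ i ∈ s, (1 - ω * nu i) := by
  by_cases hz : ∃ k ∈ s, lam k = 0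
  · obtain ⟨k, hk, hk0⟩ := hz
    set t := s.erase k with ht
    have htinj : Set.InjOn lam t := hinj.mono (by simp [ht, Finset.coe_subset, Finset.erase_subset])
    have ht0 : ∀ j ∈ t, lam j ≠ 0 := by
      intro j hj hj0
      obtain ⟨hjk, hjs⟩ := Finset.mem_erase.mp hj
      exact hjk (hinj hjs hk (hj0.trans hk0.symm))
    have hsum : ∑ i ∈ s, nu i * ∏ j ∈ s.erase i, (1 + ω * nu j * lam j / (lam i - lam j))
        = nu k * ∏ j ∈ t, (1 - ω * nu j)
          + ∑ i ∈ t, nu i * ∏ j ∈ t.erase i, (1 + ω * nu j * lam j / (lam i - lam j)) := by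
      rw [← Finset.add_sum_erase s _ hk, ← ht]
      congr 1
      · congr 1
        refine Finset.prod_congr rfl fun j hj => ?_
        rw [hk0]
        have : (0 : ℂ) - lam j = -lam j := by ring
        rw [this, div_neg, mul_div_assoc, div_self (ht0 j hj), mul_one]
        ring
      · refine Finset.sum_congr rfl fun i hi => ?_
        congr 1
        have hkmem : k ∈ s.erase i := Finset.mem_erase.mpr
          ⟨fun h => (Finset.mem_erase.mp hi).1 h.symm, hk⟩
        rw [← Finset.mul_prod_erase _ _ hkmem, hk0, mul_zero, zero_div, add_zero, one_mul,
          Finset.erase_right_comm]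
    have hkey := key0 t lam nu ω htinj ht0
    have hprod : ∏ i ∈ s, (1 - ω * nu i) = (1 - ω * nu k) * ∏ i ∈ t, (1 - ω * nu i) :=
      (Finset.mul_prod_erase s _ hk).symm
    rw [hsum, hprod, mul_add, hkey]
    ring
  · push_neg at hz
    exact key0 s lam nu ω hinj hz

/-- Lemma A.1: `S(λ, ν, ω) = Σᵢ Cᵢ(λ, ν, ω)` is a symmetric function of `λ`:
it is unchanged when a permutation `σ` is applied to the `λ`-arguments only
(keeping `ν` fixed).  In particular it is invariant under `λ₁ ↔ λ₂`. -/
theorem stmt_4 (l : ℕ) (lam nu : Fin l → ℂ) (ω : ℂ)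
    (hlam : Function.Injective lam) :
    (∀ σ : Equiv.Perm (Fin l),
        ∑ i, CC (lam ∘ σ) nu ω i = ∑ i, CC lam nu ω i) ∧
      (∀ hl : 2 ≤ l,
        ∑ i, CC (lam ∘ (Equiv.swap ⟨0, by omega⟩ ⟨1, by omega⟩)) nu ω i
          = ∑ i, CC lam nu ω i) := by
  have main : ∀ σ : Equiv.Perm (Fin l),
      ∑ i, CC (lam ∘ σ) nu ω i = ∑ i, CC lam nu ω i := by
    intro σ
    by_cases hω : ω = 0
    · subst hω
      simp [CC]
    · have h1 := key1 Finset.univ (lam ∘ σ) nu ω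
        ((hlam.comp σ.injective).injOn)
      have h2 := key1 Finset.univ lam nu ω hlam.injOn
      simp only [CC]
      exact mul_left_cancel₀ hω (h1.trans h2.symm)
  exact ⟨main, fun _ => main _⟩
end

section
/- Let λ₁,…,λ_l be pairwise distinct complex numbers with λ₁ = 0, and ν₁,…,ν_l, ω ∈ ℂ. With C_i(λ, ν, ω) = ν_i · ∏_{j ≠ i} (1 + ω·ν_j·λ_j/(λ_i − λ_j)), one has ω · Σ_{i=2}^l C_i(λ, ν, ω) = 1 − ∏_{i=2}^l (1 − ω·ν_i). -/
open Finset

/-- Partial fraction expansion: for pairwise distinct `lam` on `S` and `x` avoiding them,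
`∏_{i∈S} (1 + c i/(x - lam i)) = 1 + ∑_{i∈S} r_i/(x - lam i)` with
`r_i = c i · ∏_{j∈S\{i}} (1 + c j/(lam i - lam j))`. -/
lemma pf_lemma {ι : Type*} [DecidableEq ι] (lam c : ι → ℂ) (S : Finset ι) :
    (∀ i ∈ S, ∀ j ∈ S, i ≠ j → lam i ≠ lam j) →
    ∀ x : ℂ, (∀ i ∈ S, x ≠ lam i) →
    ∏ i ∈ S, (1 + c i / (x - lam i)) =
      1 + ∑ i ∈ S, (c i * ∏ j ∈ S.erase i, (1 + c j / (lam i - lam j))) / (x - lam i) := by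
  induction S using Finset.induction_on with
  | empty => simp
  | @insert a S ha ih =>
    intro hd x hx
    have hxa : x ≠ lam a := hx a (mem_insert_self a S)
    have hx' : ∀ i ∈ S, x ≠ lam i := fun i hi => hx i (mem_insert_of_mem hi)
    have hda : ∀ i ∈ S, lam a ≠ lam i := fun i hi =>
      hd a (mem_insert_self a S) i (mem_insert_of_mem hi)
        (by rintro rfl; exact ha hi)
    have hdS : ∀ i ∈ S, ∀ j ∈ S, i ≠ j → lam i ≠ lam j := fun i hi j hj =>
      hd i (mem_insert_of_mem hi) j (mem_insert_of_mem hj)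
    have h1 : x - lam a ≠ 0 := sub_ne_zero.mpr hxa
    rw [Finset.prod_insert ha, Finset.sum_insert ha, Finset.erase_insert ha,
      ih hdS x hx', ih hdS (lam a) hda]
    have hS : ∑ i ∈ S,
        (c i * ∏ j ∈ (insert a S).erase i, (1 + c j / (lam i - lam j))) / (x - lam i)
        = ∑ i ∈ S, (c i * ((1 + c a / (lam i - lam a)) *
            ∏ j ∈ S.erase i, (1 + c j / (lam i - lam j)))) / (x - lam i) := by
      refine Finset.sum_congr rfl (fun i hi => ?_)
      have hia : i ≠ a := by rintro rfl; exact ha hi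
      rw [Finset.erase_insert_of_ne (Ne.symm hia),
        Finset.prod_insert (fun h => ha (Finset.mem_of_mem_erase h))]
    rw [hS, mul_add, mul_one, Finset.mul_sum]
    have key : ∑ i ∈ S, (1 + c a / (x - lam a)) *
        ((c i * ∏ j ∈ S.erase i, (1 + c j / (lam i - lam j))) / (x - lam i))
        = (c a / (x - lam a)) * ∑ i ∈ S,
            (c i * ∏ j ∈ S.erase i, (1 + c j / (lam i - lam j))) / (lam a - lam i)
          + ∑ i ∈ S, (c i * ((1 + c a / (lam i - lam a)) *
              ∏ j ∈ S.erase i, (1 + c j / (lam i - lam j)))) / (x - lam i) := by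
      rw [Finset.mul_sum, ← Finset.sum_add_distrib]
      refine Finset.sum_congr rfl (fun i hi => ?_)
      have h2 : x - lam i ≠ 0 := sub_ne_zero.mpr (hx' i hi)
      have h3 : lam a - lam i ≠ 0 := sub_ne_zero.mpr (hda i hi)
      have h4 : lam i - lam a ≠ 0 := sub_ne_zero.mpr fun h => (hda i hi) h.symm
      field_simp
      ring
    rw [key]
    ring

/-- Corollary A.3 (a): if `λ₁ = 0` then
`ω · Σ_{i≥2} Cᵢ(λ, ν, ω) = 1 − ∏_{i≥2} (1 − ω νᵢ)`. -/
theorem stmt_5 (l : ℕ) (lam nu : Fin (l + 1) → ℂ) (ω : ℂ)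
    (hlam : Function.Injective lam) (h0 : lam 0 = 0) :
    ω * ∑ i ∈ Finset.univ.erase 0, CC lam nu ω i
      = 1 - ∏ i ∈ Finset.univ.erase 0, (1 - ω * nu i) := by
  classical
  set S := (Finset.univ.erase (0 : Fin (l + 1))) with hSdef
  have hx : ∀ i ∈ S, (0 : ℂ) ≠ lam i := by
    intro i hi h
    exact Finset.ne_of_mem_erase hi (hlam (h0.trans h).symm)
  have hd : ∀ i ∈ S, ∀ j ∈ S, i ≠ j → lam i ≠ lam j :=
    fun i _ j _ hij h => hij (hlam h)
  have hpf := pf_lemma lam (fun i => ω * nu i * lam i) S hd 0 hx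
  have hprod : ∏ i ∈ S, (1 + ω * nu i * lam i / (0 - lam i))
      = ∏ i ∈ S, (1 - ω * nu i) := by
    refine Finset.prod_congr rfl fun i hi => ?_
    have hlne : lam i ≠ 0 := fun h => (hx i hi) h.symm
    rw [zero_sub, div_neg, mul_div_assoc, div_self hlne, mul_one]
    ring
  have hCC : ∀ i ∈ S, CC lam nu ω i
      = nu i * ∏ j ∈ S.erase i, (1 + ω * nu j * lam j / (lam i - lam j)) := by
    intro i hi
    have hi0 : i ≠ 0 := Finset.ne_of_mem_erase hi
    unfold CC
    congr 1
    have h0mem : (0 : Fin (l + 1)) ∈ Finset.univ.erase i :=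
      Finset.mem_erase.mpr ⟨hi0.symm, Finset.mem_univ _⟩
    rw [← Finset.insert_erase h0mem,
      Finset.prod_insert (Finset.notMem_erase 0 _), h0,
      Finset.erase_right_comm]
    simp [hSdef]
  have hsum : ∑ i ∈ S,
      (ω * nu i * lam i * ∏ j ∈ S.erase i, (1 + ω * nu j * lam j / (lam i - lam j)))
        / (0 - lam i)
      = - (ω * ∑ i ∈ S, CC lam nu ω i) := by
    rw [Finset.mul_sum, ← Finset.sum_neg_distrib]
    refine Finset.sum_congr rfl fun i hi => ?_
    rw [hCC i hi]
    have hlne : lam i ≠ 0 := fun h => (hx i hi) h.symm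
    rw [zero_sub, div_neg, neg_inj, mul_right_comm,
      mul_div_cancel_right₀ _ hlne, mul_assoc]
  rw [hprod, hsum] at hpf
  linear_combination hpf
end

section
/- Fix ℏ > 0 (or a formal/nonzero parameter), set q = e^ℏ, ω = 1 − q^{−2}, and for m ∈ ℕ let m̂ = (1 − q^{−2m})/(1 − q^{−2}). Let λ₁,…,λ_l be pairwise distinct complex numbers, n₁,…,n_l positive integers with Σ n_i = n, and n̂ = (n̂₁,…,n̂_l). Then Σ_{i=1}^l C_i(λ, n̂, ω) = n̂, where C_i(λ, ν, ω) = ν_i · ∏_{j ≠ i} (1 + ω·ν_j·λ_j/(λ_i − λ_j)). -/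
open Finset

/-- The quantum integer `m̂ = (1 − q^{−2m})/(1 − q^{−2})`. -/
noncomputable def qhat (q : ℂ) (m : ℕ) : ℂ :=
  (1 - q ^ (-(2 * (m : ℤ)))) / (1 - q ^ (-2 : ℤ))

/-! Put `b_j = 1 - ω ν_j`. Then `1 + ω ν_j λ_j / (λ_i - λ_j) = (λ_i - b_j λ_j) / (λ_i - λ_j)`, so
`ω Σ_i C_i = Σ_i (1 - b_i) ∏_{j ≠ i} (λ_i - b_j λ_j) / (λ_i - λ_j)`. The polynomial
`∏_j (X - b_j λ_j) - (∏_j b_j) ∏_j (X - λ_j)` vanishes at `0`, so it is `X f` with `deg f < l`; `f`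
takes the value `(1 - b_i) ∏_{j ≠ i} (λ_i - b_j λ_j)` at `λ_i` and has `X^(l-1)`-coefficient
`1 - ∏_j b_j`, and Lagrange interpolation turns this into `ω Σ_i C_i = 1 - ∏_j b_j`. For `ν = n̂`
one has `b_j = q^(-2 n_j)`, and `1 - q^(-2n) = ω n̂`. -/

open Polynomial

namespace Lagrange

variable {K ι : Type*} [Field K] (s : Finset ι) (x b : ι → K)

noncomputable def nodalDefect : K[X] :=
  nodal s (fun j => b j * x j) - C (∏ j ∈ s, b j) * nodal s x

theorem coeff_zero_nodalDefect : (nodalDefect s x b).coeff 0 = 0 := by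
  simp only [nodalDefect, coeff_zero_eq_eval_zero, eval_sub, eval_mul, eval_C, eval_nodal,
    zero_sub, ← prod_mul_distrib]
  exact sub_eq_zero.mpr (prod_congr rfl fun j _ => by ring)

theorem natDegree_nodalDefect_le : (nodalDefect s x b).natDegree ≤ #s := by
  have := natDegree_sub_le_of_le (natDegree_nodal (s := s) (v := fun j => b j * x j)).le
    ((natDegree_C_mul_le (∏ j ∈ s, b j) _).trans (natDegree_nodal (s := s) (v := x)).le)
  rwa [max_self] at this

theorem coeff_card_nodalDefect : (nodalDefect s x b).coeff #s = 1 - ∏ j ∈ s, b j := by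
  have hmonic {v : ι → K} : (nodal s v).coeff #s = 1 := by
    simpa [natDegree_nodal] using (nodal_monic (s := s) (v := v)).coeff_natDegree
  rw [nodalDefect, coeff_sub, coeff_C_mul, hmonic, hmonic, mul_one]

variable {s x b} [DecidableEq ι]

theorem eval_nodalDefect_of_mem {i : ι} (hi : i ∈ s) :
    (nodalDefect s x b).eval (x i) = x i * ((1 - b i) * ∏ j ∈ s.erase i, (x i - b j * x j)) := by
  rw [nodalDefect, eval_sub, eval_mul, eval_nodal_at_node hi, mul_zero, sub_zero, eval_nodal,
    ← mul_prod_erase s _ hi]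
  ring

theorem nodalDefect_of_eq_zero {i : ι} (hi : i ∈ s) (hxi : x i = 0) :
    nodalDefect s x b = X * (nodal (s.erase i) (fun j => b j * x j)
      - C (b i * ∏ j ∈ s.erase i, b j) * nodal (s.erase i) x) := by
  rw [nodalDefect, nodal_eq_mul_nodal_erase hi, nodal_eq_mul_nodal_erase (v := x) hi,
    ← mul_prod_erase s b hi, hxi]
  simp only [mul_zero, map_zero, sub_zero]
  ring

theorem eval_of_nodalDefect_eq_X_mul {f : K[X]} (hf : nodalDefect s x b = X * f) {i : ι}
    (hi : i ∈ s) : f.eval (x i) = (1 - b i) * ∏ j ∈ s.erase i, (x i - b j * x j) := by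
  by_cases hxi : x i = 0
  -- at a node `x i = 0` the relation `X f = nodalDefect` cannot be divided by `x i`
  · rw [nodalDefect_of_eq_zero hi hxi] at hf
    rw [← mul_left_cancel₀ X_ne_zero hf, hxi]
    simp only [eval_sub, eval_mul, eval_C, eval_nodal, zero_sub, mul_assoc, ← prod_mul_distrib]
    ring_nf
  · have := eval_nodalDefect_of_mem (x := x) (b := b) hi
    rw [hf, eval_mul, eval_X] at this
    exact mul_left_cancel₀ hxi this

theorem sum_mul_prod_sub_mul_div_sub (hx : Set.InjOn x s) (b : ι → K) :
    ∑ i ∈ s, (1 - b i) * ∏ j ∈ s.erase i, (x i - b j * x j) / (x i - x j)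
      = 1 - ∏ i ∈ s, b i := by
  rcases s.eq_empty_or_nonempty with rfl | hs
  · simp
  obtain ⟨f, hf⟩ := X_dvd_iff.mpr (coeff_zero_nodalDefect s x b)
  have hcoeff : f.coeff (#s - 1) = 1 - ∏ i ∈ s, b i := by
    rw [← coeff_card_nodalDefect s x b, hf, ← coeff_X_mul, Nat.sub_add_cancel hs.card_pos]
  have hdeg : f.degree < #s := by
    refine (degree_lt_iff_coeff_zero f _).mpr fun m hm => ?_
    rw [← coeff_X_mul, ← hf]
    exact coeff_eq_zero_of_natDegree_lt ((natDegree_nodalDefect_le s x b).trans_lt (by omega))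
  rw [← hcoeff, coeff_eq_sum hx hdeg]
  refine sum_congr rfl fun i hi => ?_
  rw [eval_of_nodalDefect_eq_X_mul hf hi, prod_div_distrib, mul_div_assoc]

end Lagrange

theorem mul_sum_CC {l : ℕ} {lam : Fin l → ℂ} (hlam : Function.Injective lam) (nu : Fin l → ℂ)
    (ω : ℂ) : ω * ∑ i, CC lam nu ω i = 1 - ∏ i, (1 - ω * nu i) := by
  rw [← Lagrange.sum_mul_prod_sub_mul_div_sub hlam.injOn, mul_sum]
  refine sum_congr rfl fun i _ => ?_
  rw [CC.eq_def, ← mul_assoc, sub_sub_cancel]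
  congr 1
  refine prod_congr rfl fun j hj => ?_
  have hij : lam i - lam j ≠ 0 := sub_ne_zero.mpr (hlam.ne (ne_of_mem_erase hj).symm)
  field_simp
  ring

theorem mul_qhat {q : ℂ} (hq : 1 - q ^ (-2 : ℤ) ≠ 0) (m : ℕ) :
    (1 - q ^ (-2 : ℤ)) * qhat q m = 1 - (q ^ (-2 : ℤ)) ^ m := by
  rw [qhat, mul_div_cancel₀ _ hq, ← zpow_natCast, ← zpow_mul, neg_mul]

theorem one_sub_exp_zpow_neg_two_ne_zero {ℏ : ℝ} (hℏ : 0 < ℏ) :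
    1 - Complex.exp ℏ ^ (-2 : ℤ) ≠ 0 := by
  have hlt : Real.exp ℏ ^ (-2 : ℤ) < 1 :=
    zpow_lt_one_of_neg₀ (Real.one_lt_exp_iff.mpr hℏ) (by norm_num)
  rw [sub_ne_zero, ne_comm, ← Complex.ofReal_exp, ← Complex.ofReal_zpow, Ne, Complex.ofReal_eq_one]
  exact hlt.ne

theorem stmt_7_general (ℏ : ℝ) (hℏ : 0 < ℏ) (l : ℕ) (lam : Fin l → ℂ)
    (hlam : Function.Injective lam) (nn : Fin l → ℕ)
    (n : ℕ) (hn : n = ∑ i, nn i) :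
    ∑ i, CC lam (fun i => qhat (Complex.exp ℏ) (nn i)) (1 - (Complex.exp ℏ) ^ (-2 : ℤ)) i
      = qhat (Complex.exp ℏ) n := by
  have hω := one_sub_exp_zpow_neg_two_ne_zero hℏ
  apply mul_left_cancel₀ hω
  simp only [mul_sum_CC hlam, mul_qhat hω, sub_sub_cancel, prod_pow_eq_pow_sum, hn]

/-- Corollary A.3 (c): with `q = e^ℏ`, `ω = 1 − q^{−2}`, `n̂ᵢ` the quantum
integers of the multiplicities `nᵢ` and `n = Σ nᵢ`, one has
`Σᵢ Cᵢ(λ, n̂, ω) = n̂`. -/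
theorem stmt_7 (ℏ : ℝ) (hℏ : 0 < ℏ) (l : ℕ) (lam : Fin l → ℂ)
    (hlam : Function.Injective lam) (nn : Fin l → ℕ) (hnn : ∀ i, 0 < nn i)
    (n : ℕ) (hn : n = ∑ i, nn i) :
    ∑ i, CC lam (fun i => qhat (Complex.exp ℏ) (nn i)) (1 - (Complex.exp ℏ) ^ (-2 : ℤ)) i
      = qhat (Complex.exp ℏ) n :=
  stmt_7_general ℏ hℏ l lam hlam nn n hn
end
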